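/- arXiv:2202.13091 — 3 statements merged into one kernel-verified Lean document; each statement's English description precedes it below -/
import Mathlib

section
/- Let (X, σ, ρ) be a cubic combinatorial map of genus 0 (a plane trivalent graph). Then the Penrose number P of the map, defined as the sum over all Tait colorings f of s(f), where s(f) = 1 if n⁺(f) ≡ n⁻(f) (mod 4) and s(f) = −1 otherwise, equals the total number of Tait colorings of the map. -/
/-- A combinatorial map on a finite set `X` of darts: `sigma` is a fixed-point-free
involution whose orbits are the edges, `rho` is a permutation whose orbits are the
vertices (the counterclockwise cyclic order of darts around each vertex). -/
structure CombMap (X : Type) [Fintype X] where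
  sigma : Equiv.Perm X
  rho : Equiv.Perm X
  sigma_invol : sigma * sigma = 1
  sigma_fixfree : ∀ x, sigma x ≠ x

/-- The number of orbits of the action on `X` of a subgroup of permutations of `X`. -/
noncomputable def orbitCount {X : Type} [Fintype X] (S : Subgroup (Equiv.Perm X)) : ℕ :=
  Nat.card (MulAction.orbitRel.Quotient S X)

namespace CombMap

variable {X : Type} [Fintype X] (m : CombMap X)

/-- `V`: the number of vertices, i.e. orbits of `rho`. -/
noncomputable def numVertices : ℕ := orbitCount (Subgroup.zpowers m.rho)

/-- `E`: the number of edges, i.e. orbits of `sigma`. -/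
noncomputable def numEdges : ℕ := orbitCount (Subgroup.zpowers m.sigma)

/-- `F`: the number of faces, i.e. orbits of `sigma ∘ rho`. -/
noncomputable def numFaces : ℕ := orbitCount (Subgroup.zpowers (m.sigma * m.rho))

/-- `C`: the number of connected components, i.e. orbits of the subgroup
generated by `sigma` and `rho`. -/
noncomputable def numComponents : ℕ := orbitCount (Subgroup.closure {m.sigma, m.rho})

/-- The map is cubic (trivalent): every vertex consists of exactly 3 darts. -/
def IsCubic : Prop := m.rho ^ 3 = 1 ∧ ∀ x, m.rho x ≠ x

/-- Genus 0 (plane): `V - E + F = 2C`, written additively over `ℕ`. -/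
def IsGenusZero : Prop := m.numVertices + m.numFaces = m.numEdges + 2 * m.numComponents

/-- A Tait coloring, encoded as a function on darts with values in `Fin 3`
(the colors `0, 1, 2` stand for `1, 2, 3`) that is constant on each edge
`{x, sigma x}` and assigns pairwise distinct colors to the three edges
containing the three darts `x, rho x, rho² x` of each vertex. -/
def IsTaitColoring (f : X → Fin 3) : Prop :=
  (∀ x, f (m.sigma x) = f x) ∧
  (∀ x, f (m.rho x) ≠ f x ∧ f (m.rho (m.rho x)) ≠ f x ∧ f (m.rho (m.rho x)) ≠ f (m.rho x))

/-- The dart `x` is positive with respect to `f`: reading the colors of the edges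
containing `x`, `rho⁻¹ x`, `rho⁻² x` in that (clockwise) order yields the cyclic
sequence `(1,2,3)`, i.e. `(0,1,2)` cyclically in `Fin 3`.  A vertex of a cubic map
is positive iff all three of its darts are positive darts. -/
def PositiveDart (f : X → Fin 3) (x : X) : Prop :=
  f (m.rho⁻¹ x) = f x + 1 ∧ f (m.rho⁻¹ (m.rho⁻¹ x)) = f x + 2

/-- The dart `x` is negative with respect to `f`: reading the colors at
`x`, `rho⁻¹ x`, `rho⁻² x` yields the cyclic sequence `(1,3,2)`. -/
def NegativeDart (f : X → Fin 3) (x : X) : Prop :=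
  f (m.rho⁻¹ x) = f x + 2 ∧ f (m.rho⁻¹ (m.rho⁻¹ x)) = f x + 1

/-- `n⁺(f)`: the number of positive vertices with respect to `f`.  In a cubic map
each positive vertex contains exactly three (positive) darts, so we divide by 3. -/
noncomputable def nplus (f : X → Fin 3) : ℕ :=
  Nat.card {x : X // m.PositiveDart f x} / 3

/-- `n⁻(f)`: the number of negative vertices with respect to `f`. -/
noncomputable def nminus (f : X → Fin 3) : ℕ :=
  Nat.card {x : X // m.NegativeDart f x} / 3

/-- The sign `s(f)` of a Tait coloring `f`: `1` if `n⁺(f) ≡ n⁻(f) (mod 4)`,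
and `-1` otherwise. -/
noncomputable def sign (f : X → Fin 3) : ℤ :=
  if m.nplus f ≡ m.nminus f [MOD 4] then 1 else -1

end CombMap

/-!
A Tait coloring of a cubic map is a nowhere-zero flow with values in the Klein four-group
`K = (ℤ/2)²`, the three colors being its three nonzero elements. On a plane map every mod-2 cycle
is a boundary, so this flow is the coboundary of a potential `φ` on the faces: the color of an edge
is the sum of the potentials of the two faces along it. Weight the ordered pair of faces seen
across the edge of a dart by `±1 ∈ ℤ/4` according to the cyclic order of `K \ {0}`. Around a vertex
the three weights add up to `+1` or `-1` according as the vertex is positive or negative, while the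
two darts of an edge see its faces in opposite orders, so all the weights add up to `0`. Hence
`3n⁺ ≡ 3n⁻` and `n⁺ ≡ n⁻ (mod 4)`: every Tait coloring has sign `1`.

Planarity enters through a dimension count over `ℤ/2`: the boundaries of face functions form a
subspace of dimension `F - C` of the cycle space, which has dimension `E - V + C`, and Euler's
formula says that these agree.
-/

open Module LinearMap

theorem Submodule.finrank_map_add_finrank_inf_ker {K V W : Type*} [DivisionRing K]
    [AddCommGroup V] [Module K V] [AddCommGroup W] [Module K W] [FiniteDimensional K V]
    (f : V →ₗ[K] W) (p : Submodule K V) :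
    finrank K (p.map f) + finrank K (p ⊓ ker f : Submodule K V) = finrank K p := by
  have h := (f.domRestrict p).finrank_range_add_finrank_ker
  rwa [range_domRestrict, ker_domRestrict, ← Submodule.finrank_map_subtype_eq,
    Submodule.map_comap_subtype] at h

theorem LinearMap.finrank_range_comp_comm_of_isSymm {K n : Type*} [Field K] [Fintype n]
    [DecidableEq n] {f g : (n → K) →ₗ[K] n → K} (hf : (toMatrix' f).IsSymm)
    (hg : (toMatrix' g).IsSymm) :
    finrank K (range (f ∘ₗ g)) = finrank K (range (g ∘ₗ f)) := by
  have hrank (h : (n → K) →ₗ[K] n → K) : finrank K (range h) = (toMatrix' h).rank := by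
    rw [Matrix.rank, ← Matrix.toLin'_apply', Matrix.toLin'_toMatrix']
  rw [hrank, hrank, toMatrix'_comp, toMatrix'_comp, ← Matrix.rank_transpose,
    Matrix.transpose_mul, hf.eq, hg.eq]

theorem LinearMap.transpose_toMatrix'_funLeft {K n : Type*} [Field K] [Fintype n]
    [DecidableEq n] (π : Equiv.Perm n) :
    (toMatrix' (funLeft K K π)).transpose = toMatrix' (funLeft K K ⇑π⁻¹) := by
  ext i j
  simp only [Matrix.transpose_apply, toMatrix'_apply, funLeft_apply, Pi.single_apply,
    Equiv.Perm.coe_inv, Equiv.eq_symm_apply, eq_comm]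

section InvariantFunctions

variable (K : Type*) [Field K] {X : Type}

def invariantFunctions (S : Subgroup (Equiv.Perm X)) : Submodule K (X → K) where
  carrier := {g | ∀ u ∈ S, ∀ x, g (u x) = g x}
  add_mem' hg hh u hu x := by simp [hg u hu x, hh u hu x]
  zero_mem' _ _ _ := rfl
  smul_mem' c g hg u hu x := by simp [hg u hu x]

variable {K}

theorem mem_invariantFunctions_closure {T : Set (Equiv.Perm X)} {g : X → K} :
    g ∈ invariantFunctions K (Subgroup.closure T) ↔ ∀ u ∈ T, ∀ x, g (u x) = g x := by
  refine ⟨fun hg u hu => hg u (Subgroup.subset_closure hu), fun hg u hu => ?_⟩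
  induction hu using Subgroup.closure_induction with
  | mem u hu => exact hg u hu
  | one => exact fun _ => rfl
  | mul u v _ _ hu hv => exact fun x => (hu (v x)).trans (hv x)
  | inv u _ hu => exact fun x => by simpa using (hu (u⁻¹ x)).symm

theorem mem_invariantFunctions_zpowers {π : Equiv.Perm X} {g : X → K} :
    g ∈ invariantFunctions K (Subgroup.zpowers π) ↔ ∀ x, g (π x) = g x := by
  simp [Subgroup.zpowers_eq_closure, mem_invariantFunctions_closure]

theorem finrank_invariantFunctions [Fintype X] (S : Subgroup (Equiv.Perm X)) :
    finrank K (invariantFunctions K S) = orbitCount S := by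
  classical
  let mk : X → MulAction.orbitRel.Quotient S X := Quotient.mk''
  have hrange : range (funLeft K K mk) = invariantFunctions K S := by
    ext g
    refine ⟨?_, fun hg => ⟨Quotient.lift g ?_, rfl⟩⟩
    · rintro ⟨h, rfl⟩ u hu x
      exact congrArg h (Quotient.sound' ⟨⟨u, hu⟩, rfl⟩)
    · rintro _ y ⟨u, rfl⟩
      exact hg u u.2 y
  have := Fintype.ofFinite (MulAction.orbitRel.Quotient S X)
  rw [← hrange,
    finrank_range_of_inj (funLeft_injective_of_surjective _ _ _ Quotient.mk''_surjective),
    finrank_pi, orbitCount, Nat.card_eq_fintype_card]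

end InvariantFunctions

namespace CombMap

variable {X : Type} [Fintype X] (m : CombMap X)

def vertexFunctions : Submodule (ZMod 2) (X → ZMod 2) :=
  invariantFunctions _ (Subgroup.zpowers m.rho)

def edgeFunctions : Submodule (ZMod 2) (X → ZMod 2) :=
  invariantFunctions _ (Subgroup.zpowers m.sigma)

def faceFunctions : Submodule (ZMod 2) (X → ZMod 2) :=
  invariantFunctions _ (Subgroup.zpowers (m.sigma * m.rho))

def componentFunctions : Submodule (ZMod 2) (X → ZMod 2) :=
  invariantFunctions _ (Subgroup.closure {m.sigma, m.rho})

/- On face functions `edgeSum` is the boundary map `∂₂` (an edge gets the sum of the two faces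
along it), on vertex functions it is the coboundary `δ⁰` (an edge gets the sum of its two ends);
on edge functions `vertexSum` is the boundary map `∂₁`. -/
def edgeSum : (X → ZMod 2) →ₗ[ZMod 2] X → ZMod 2 :=
  LinearMap.id + funLeft _ _ m.sigma

def vertexSum : (X → ZMod 2) →ₗ[ZMod 2] X → ZMod 2 :=
  LinearMap.id + funLeft _ _ m.rho + funLeft _ _ ⇑m.rho⁻¹

def cycles : Submodule (ZMod 2) (X → ZMod 2) :=
  m.edgeFunctions ⊓ ker m.vertexSum

variable {m}

@[simp]
theorem sigma_sigma (x : X) : m.sigma (m.sigma x) = x := by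
  simpa using DFunLike.congr_fun m.sigma_invol x

theorem sigma_inv : m.sigma⁻¹ = m.sigma :=
  inv_eq_of_mul_eq_one_left m.sigma_invol

theorem rho_rho_rho (hρ : m.rho ^ 3 = 1) (x : X) : m.rho (m.rho (m.rho x)) = x := by
  simpa [pow_succ, Equiv.Perm.mul_apply] using DFunLike.congr_fun hρ x

theorem rho_inv_apply (hρ : m.rho ^ 3 = 1) (x : X) : m.rho⁻¹ x = m.rho (m.rho x) := by
  rw [Equiv.Perm.inv_eq_iff_eq, rho_rho_rho hρ]

theorem rho_inv_rho_inv (hρ : m.rho ^ 3 = 1) (x : X) : m.rho⁻¹ (m.rho⁻¹ x) = m.rho x := by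
  simp only [Equiv.Perm.inv_eq_iff_eq, rho_rho_rho hρ]

theorem rho_inv_rho_inv_rho_inv (hρ : m.rho ^ 3 = 1) (x : X) :
    m.rho⁻¹ (m.rho⁻¹ (m.rho⁻¹ x)) = x := by
  simp only [Equiv.Perm.inv_eq_iff_eq, rho_rho_rho hρ]

@[simp]
theorem edgeSum_apply (g : X → ZMod 2) (x : X) : m.edgeSum g x = g x + g (m.sigma x) := rfl

@[simp]
theorem vertexSum_apply (g : X → ZMod 2) (x : X) :
    m.vertexSum g x = g x + g (m.rho x) + g (m.rho⁻¹ x) := rfl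

theorem mem_vertexFunctions {g : X → ZMod 2} :
    g ∈ m.vertexFunctions ↔ ∀ x, g (m.rho x) = g x :=
  mem_invariantFunctions_zpowers

theorem mem_edgeFunctions {g : X → ZMod 2} :
    g ∈ m.edgeFunctions ↔ ∀ x, g (m.sigma x) = g x :=
  mem_invariantFunctions_zpowers

theorem mem_faceFunctions {g : X → ZMod 2} :
    g ∈ m.faceFunctions ↔ ∀ x, g (m.sigma x) = g (m.rho⁻¹ x) := by
  rw [faceFunctions, mem_invariantFunctions_zpowers]
  exact ⟨fun h x => by simpa using h (m.rho⁻¹ x), fun h x => by simpa using h (m.rho x)⟩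

theorem mem_componentFunctions {g : X → ZMod 2} :
    g ∈ m.componentFunctions ↔ (∀ x, g (m.sigma x) = g x) ∧ ∀ x, g (m.rho x) = g x := by
  simp [componentFunctions, mem_invariantFunctions_closure]

theorem finrank_vertexFunctions : finrank (ZMod 2) m.vertexFunctions = m.numVertices :=
  finrank_invariantFunctions _

theorem finrank_edgeFunctions : finrank (ZMod 2) m.edgeFunctions = m.numEdges :=
  finrank_invariantFunctions _

theorem finrank_faceFunctions : finrank (ZMod 2) m.faceFunctions = m.numFaces :=
  finrank_invariantFunctions _

theorem finrank_componentFunctions :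
    finrank (ZMod 2) m.componentFunctions = m.numComponents :=
  finrank_invariantFunctions _

theorem ker_edgeSum : ker m.edgeSum = m.edgeFunctions := by
  ext g
  simp only [LinearMap.mem_ker, funext_iff, edgeSum_apply, Pi.zero_apply, CharTwo.add_eq_zero,
    mem_edgeFunctions]
  exact forall_congr' fun x => eq_comm

theorem range_edgeSum : range m.edgeSum = m.edgeFunctions := by
  refine le_antisymm ?_ fun g hg => ?_
  · rintro _ ⟨a, rfl⟩
    exact mem_edgeFunctions.2 fun x => by simp [add_comm]
  -- `g` is the boundary of its restriction to one dart of each edge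
  let _ : LinearOrder X := LinearOrder.lift' _ (Fintype.equivFin X).injective
  refine ⟨fun x => if x < m.sigma x then g x else 0, funext fun x => ?_⟩
  have hx := m.sigma_fixfree x
  rcases lt_or_gt_of_ne hx with h | h
  · simpa [h, h.not_gt] using mem_edgeFunctions.1 hg x
  · simp [h, h.not_gt]

theorem range_vertexSum (hρ : m.rho ^ 3 = 1) : range m.vertexSum = m.vertexFunctions := by
  refine le_antisymm ?_ fun g hg => ⟨g, funext fun x => ?_⟩
  · rintro _ ⟨a, rfl⟩
    refine mem_vertexFunctions.2 fun x => ?_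
    simp only [vertexSum_apply, rho_inv_apply hρ, rho_rho_rho hρ]
    ring
  · have h := mem_vertexFunctions.1 hg
    have h' : g (m.rho⁻¹ x) = g x := by simpa using (h (m.rho⁻¹ x)).symm
    rw [vertexSum_apply, h, h', CharTwo.add_cancel_right]

theorem faceFunctions_inf_edgeFunctions :
    m.faceFunctions ⊓ m.edgeFunctions = m.componentFunctions := by
  ext g
  simp only [Submodule.mem_inf, mem_faceFunctions, mem_edgeFunctions, mem_componentFunctions]
  refine ⟨fun ⟨hF, hE⟩ => ⟨hE, fun x => ?_⟩, fun ⟨hE, hV⟩ => ⟨fun x => ?_, hE⟩⟩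
  · simpa [hE] using hF (m.rho x)
  · simpa [hE] using hV (m.rho⁻¹ x)

theorem vertexFunctions_inf_edgeFunctions :
    m.vertexFunctions ⊓ m.edgeFunctions = m.componentFunctions := by
  ext g
  simp only [Submodule.mem_inf, mem_vertexFunctions, mem_edgeFunctions, mem_componentFunctions,
    and_comm]

theorem isSymm_toMatrix'_edgeSum [DecidableEq X] : (toMatrix' m.edgeSum).IsSymm := by
  rw [Matrix.IsSymm, edgeSum, map_add, toMatrix'_id, Matrix.transpose_add, Matrix.transpose_one,
    transpose_toMatrix'_funLeft, sigma_inv]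

theorem isSymm_toMatrix'_vertexSum [DecidableEq X] : (toMatrix' m.vertexSum).IsSymm := by
  rw [Matrix.IsSymm, vertexSum, map_add, map_add, toMatrix'_id, Matrix.transpose_add,
    Matrix.transpose_add, Matrix.transpose_one, transpose_toMatrix'_funLeft,
    transpose_toMatrix'_funLeft, inv_inv, add_right_comm]

theorem finrank_map_edgeSum_faceFunctions :
    finrank (ZMod 2) (m.faceFunctions.map m.edgeSum) + m.numComponents = m.numFaces := by
  have h := Submodule.finrank_map_add_finrank_inf_ker m.edgeSum m.faceFunctions
  rwa [ker_edgeSum, faceFunctions_inf_edgeFunctions, finrank_componentFunctions,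
    finrank_faceFunctions] at h

theorem finrank_map_edgeSum_vertexFunctions :
    finrank (ZMod 2) (m.vertexFunctions.map m.edgeSum) + m.numComponents = m.numVertices := by
  have h := Submodule.finrank_map_add_finrank_inf_ker m.edgeSum m.vertexFunctions
  rwa [ker_edgeSum, vertexFunctions_inf_edgeFunctions, finrank_componentFunctions,
    finrank_vertexFunctions] at h

/- The rank of `∂₁` is read off from its transpose `δ⁰`, whose kernel consists of the functions
constant on components. -/
theorem finrank_cycles_add_numVertices (hρ : m.rho ^ 3 = 1) :
    finrank (ZMod 2) m.cycles + m.numVertices = m.numEdges + m.numComponents := by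
  classical
  have hE := Submodule.finrank_map_add_finrank_inf_ker m.vertexSum m.edgeFunctions
  have hrank : finrank (ZMod 2) (m.edgeFunctions.map m.vertexSum) =
      finrank (ZMod 2) (m.vertexFunctions.map m.edgeSum) := by
    rw [← range_edgeSum, ← range_vertexSum hρ, ← range_comp, ← range_comp]
    exact finrank_range_comp_comm_of_isSymm isSymm_toMatrix'_vertexSum isSymm_toMatrix'_edgeSum
  have hV := finrank_map_edgeSum_vertexFunctions (m := m)
  rw [finrank_edgeFunctions] at hE
  rw [cycles]
  omega

theorem map_edgeSum_faceFunctions_le_cycles (hρ : m.rho ^ 3 = 1) :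
    m.faceFunctions.map m.edgeSum ≤ m.cycles := by
  rintro _ ⟨h, hh, rfl⟩
  refine ⟨range_edgeSum (m := m) ▸ mem_range_self _ h, funext fun x => ?_⟩
  simp only [vertexSum_apply, edgeSum_apply, mem_faceFunctions.1 hh, rho_inv_rho_inv hρ,
    Equiv.Perm.inv_eq_iff_eq.2 rfl, Pi.zero_apply]
  linear_combination (h x + h (m.rho x) + h (m.rho⁻¹ x)) * CharTwo.two_eq_zero (R := ZMod 2)

theorem map_edgeSum_faceFunctions_eq_cycles (hρ : m.rho ^ 3 = 1) (hgenus : m.IsGenusZero) :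
    m.faceFunctions.map m.edgeSum = m.cycles := by
  refine Submodule.eq_of_le_of_finrank_le (map_edgeSum_faceFunctions_le_cycles hρ) ?_
  have hC := finrank_cycles_add_numVertices hρ
  have hF := finrank_map_edgeSum_faceFunctions (m := m)
  unfold IsGenusZero at hgenus
  omega

end CombMap

def toKlein : Fin 3 → ZMod 2 × ZMod 2
  | 0 => (0, 1)
  | 1 => (1, 0)
  | 2 => (1, 1)

theorem toKlein_add_add_eq_zero :
    ∀ {p q r : Fin 3}, q ≠ p → r ≠ p → r ≠ q → toKlein p + toKlein q + toKlein r = 0 := by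
  decide

def cornerWeight (a b : ZMod 2 × ZMod 2) : ZMod 4 :=
  if ∃ i, b = toKlein i ∧ a = toKlein (i + 1) then 1
  else if ∃ i, a = toKlein i ∧ b = toKlein (i + 1) then -1 else 0

theorem cornerWeight_add_swap : ∀ a b, cornerWeight a b + cornerWeight b a = 0 := by
  decide

theorem cornerWeight_add_add :
    ∀ (a b c : ZMod 2 × ZMod 2) (p q r : Fin 3),
      toKlein p = a + b → toKlein q = b + c → toKlein r = c + a →
      cornerWeight a b + cornerWeight b c + cornerWeight c a =
        (if q = p + 1 ∧ r = p + 2 then 1 else 0) - (if q = p + 2 ∧ r = p + 1 then 1 else 0) := by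
  decide

theorem Equiv.Perm.dvd_natCard_subtype_of_pow_eq_one {X : Type} [Finite X] {π : Equiv.Perm X}
    {q : ℕ} [Fact q.Prime] (hπ : π ^ q = 1) (hfree : ∀ x, π x ≠ x) {p : X → Prop}
    (hp : ∀ x, p (π x) ↔ p x) : q ∣ Nat.card {x // p x} := by
  classical
  have := Fintype.ofFinite X
  have hpow : π.subtypePerm hp ^ q ^ 1 = 1 := by
    rw [pow_one, Equiv.Perm.subtypePerm_pow]
    ext
    simp [hπ]
  have hsupport : (π.subtypePerm hp).supportᶜ = ∅ := by
    ext x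
    simp [Subtype.ext_iff, hfree]
  have := Equiv.Perm.card_compl_support_modEq hpow
  rw [hsupport, Finset.card_empty] at this
  rw [Nat.card_eq_fintype_card]
  exact Nat.modEq_zero_iff_dvd.1 this.symm

namespace CombMap

variable {X : Type} [Fintype X] {m : CombMap X}

theorem exists_kleinPotential (hρ : m.rho ^ 3 = 1) (hgenus : m.IsGenusZero) {f : X → Fin 3}
    (hf : m.IsTaitColoring f) :
    ∃ φ : X → ZMod 2 × ZMod 2, (∀ x, φ (m.sigma x) = φ (m.rho⁻¹ x)) ∧
      ∀ x, toKlein (f x) = φ x + φ (m.rho⁻¹ x) := by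
  have hcycle (ℓ : ZMod 2 × ZMod 2 →+ ZMod 2) : (fun x => ℓ (toKlein (f x))) ∈ m.cycles := by
    refine ⟨mem_edgeFunctions.2 fun x => by simp only [hf.1 x], funext fun x => ?_⟩
    obtain ⟨h₁, h₂, h₃⟩ := hf.2 x
    simp only [vertexSum_apply, rho_inv_apply hρ, Pi.zero_apply, ← map_add,
      toKlein_add_add_eq_zero h₁ h₂ h₃, map_zero]
  rw [← map_edgeSum_faceFunctions_eq_cycles hρ hgenus] at hcycle
  obtain ⟨φ₁, hφ₁, hedge₁⟩ := hcycle (AddMonoidHom.fst _ _)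
  obtain ⟨φ₂, hφ₂, hedge₂⟩ := hcycle (AddMonoidHom.snd _ _)
  have hface (x : X) : (φ₁ (m.sigma x), φ₂ (m.sigma x)) = (φ₁ (m.rho⁻¹ x), φ₂ (m.rho⁻¹ x)) := by
    rw [mem_faceFunctions.1 hφ₁, mem_faceFunctions.1 hφ₂]
  refine ⟨fun x => (φ₁ x, φ₂ x), hface, fun x => Prod.ext ?_ ?_⟩
  · show (toKlein (f x)).1 = φ₁ x + φ₁ (m.rho⁻¹ x)
    rw [← mem_faceFunctions.1 hφ₁]
    exact (congrFun hedge₁ x).symm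
  · show (toKlein (f x)).2 = φ₂ x + φ₂ (m.rho⁻¹ x)
    rw [← mem_faceFunctions.1 hφ₂]
    exact (congrFun hedge₂ x).symm

theorem sum_cornerWeight_eq_zero {φ : X → ZMod 2 × ZMod 2}
    (hφ : ∀ x, φ (m.sigma x) = φ (m.rho⁻¹ x)) :
    ∑ x, cornerWeight (φ x) (φ (m.rho⁻¹ x)) = 0 := by
  refine Finset.sum_involution (fun x _ => m.sigma x) (fun x _ => ?_)
    (fun x _ _ => m.sigma_fixfree x) (fun _ _ => Finset.mem_univ _) (fun x _ => sigma_sigma x)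
  have hback : φ (m.rho⁻¹ (m.sigma x)) = φ x := by rw [← hφ, sigma_sigma]
  rw [← hφ, hback, cornerWeight_add_swap]

theorem sum_cornerWeight_around_vertices_eq_zero (hρ : m.rho ^ 3 = 1)
    {φ : X → ZMod 2 × ZMod 2} (hφ : ∀ x, φ (m.sigma x) = φ (m.rho⁻¹ x)) :
    ∑ x, (cornerWeight (φ x) (φ (m.rho⁻¹ x)) +
      cornerWeight (φ (m.rho⁻¹ x)) (φ (m.rho⁻¹ (m.rho⁻¹ x))) +
      cornerWeight (φ (m.rho⁻¹ (m.rho⁻¹ x))) (φ x)) = 0 := by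
  set w : X → ZMod 4 := fun x => cornerWeight (φ x) (φ (m.rho⁻¹ x))
  have h₁ : ∑ x, w (m.rho⁻¹ x) = ∑ x, w x := Equiv.sum_comp m.rho⁻¹ w
  have h₂ : ∑ x, cornerWeight (φ (m.rho⁻¹ (m.rho⁻¹ x))) (φ x) = ∑ x, w x :=
    (Finset.sum_congr rfl fun x _ => by
      simp only [w, Equiv.Perm.mul_apply, rho_inv_rho_inv_rho_inv hρ]).trans
      (Equiv.sum_comp (m.rho⁻¹ * m.rho⁻¹) w)
  rw [Finset.sum_add_distrib, Finset.sum_add_distrib, h₁, h₂, sum_cornerWeight_eq_zero hφ]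
  norm_num

theorem positiveDart_rho_inv_iff (hρ : m.rho ^ 3 = 1) {f : X → Fin 3} {x : X} :
    m.PositiveDart f (m.rho⁻¹ x) ↔ m.PositiveDart f x := by
  unfold PositiveDart
  rw [rho_inv_rho_inv_rho_inv hρ]
  generalize f x = p, f (m.rho⁻¹ x) = q, f (m.rho⁻¹ (m.rho⁻¹ x)) = r
  revert p q r
  decide

theorem negativeDart_rho_inv_iff (hρ : m.rho ^ 3 = 1) {f : X → Fin 3} {x : X} :
    m.NegativeDart f (m.rho⁻¹ x) ↔ m.NegativeDart f x := by
  unfold NegativeDart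
  rw [rho_inv_rho_inv_rho_inv hρ]
  generalize f x = p, f (m.rho⁻¹ x) = q, f (m.rho⁻¹ (m.rho⁻¹ x)) = r
  revert p q r
  decide

theorem natCard_positiveDart_eq_natCard_negativeDart (hρ : m.rho ^ 3 = 1)
    (hgenus : m.IsGenusZero) {f : X → Fin 3} (hf : m.IsTaitColoring f) :
    (Nat.card {x // m.PositiveDart f x} : ZMod 4) = Nat.card {x // m.NegativeDart f x} := by
  classical
  obtain ⟨φ, hφ, hcolor⟩ := exists_kleinPotential hρ hgenus hf
  have hvertex (x : X) :
      cornerWeight (φ x) (φ (m.rho⁻¹ x)) +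
        cornerWeight (φ (m.rho⁻¹ x)) (φ (m.rho⁻¹ (m.rho⁻¹ x))) +
        cornerWeight (φ (m.rho⁻¹ (m.rho⁻¹ x))) (φ x) =
      (if m.PositiveDart f x then 1 else 0) - (if m.NegativeDart f x then 1 else 0) := by
    convert cornerWeight_add_add _ _ _ _ _ _ (hcolor x) (hcolor _)
      (by rw [hcolor, rho_inv_rho_inv_rho_inv hρ]) <;> exact Iff.rfl
  have htotal := sum_cornerWeight_around_vertices_eq_zero hρ hφ
  rw [Finset.sum_congr rfl fun x _ => hvertex x, Finset.sum_sub_distrib, Finset.sum_boole,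
    Finset.sum_boole, sub_eq_zero] at htotal
  simpa [Nat.card_eq_fintype_card, Fintype.card_subtype] using htotal

theorem nplus_modEq_nminus (hcubic : m.IsCubic) (hgenus : m.IsGenusZero) {f : X → Fin 3}
    (hf : m.IsTaitColoring f) : m.nplus f ≡ m.nminus f [MOD 4] := by
  have hρ : m.rho⁻¹ ^ 3 = 1 := by rw [inv_pow, hcubic.1, inv_one]
  have hfree (x : X) : m.rho⁻¹ x ≠ x := fun hx => hcubic.2 x (Equiv.Perm.inv_eq_iff_eq.1 hx).symm
  obtain ⟨k, hk⟩ := Equiv.Perm.dvd_natCard_subtype_of_pow_eq_one hρ hfree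
    fun _ => positiveDart_rho_inv_iff hcubic.1 (f := f)
  obtain ⟨l, hl⟩ := Equiv.Perm.dvd_natCard_subtype_of_pow_eq_one hρ hfree
    fun _ => negativeDart_rho_inv_iff hcubic.1 (f := f)
  have hmod := (ZMod.natCast_eq_natCast_iff _ _ _).1
    (natCard_positiveDart_eq_natCard_negativeDart hcubic.1 hgenus hf)
  rw [hk, hl] at hmod
  rw [nplus, nminus, hk, hl, Nat.mul_div_cancel_left _ three_pos,
    Nat.mul_div_cancel_left _ three_pos]
  exact Nat.ModEq.cancel_left_of_coprime (by decide) hmod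

end CombMap

open Classical in
/-- For a cubic combinatorial map of genus 0 (a plane trivalent graph), the Penrose
number — the sum of the signs `s(f)` over all Tait colorings `f` — equals the total
number of Tait colorings. -/
theorem penrose_number_eq_card_taitColorings {X : Type} [Fintype X] (m : CombMap X)
    (hcubic : m.IsCubic) (hgenus : m.IsGenusZero) :
    ∑ f ∈ Finset.univ.filter (fun f : X → Fin 3 => m.IsTaitColoring f), m.sign f =
      ((Finset.univ.filter (fun f : X → Fin 3 => m.IsTaitColoring f)).card : ℤ) := by
  have hsign : ∀ f ∈ Finset.univ.filter (fun f : X → Fin 3 => m.IsTaitColoring f), m.sign f = 1 :=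
    fun f hf => if_pos (m.nplus_modEq_nminus hcubic hgenus (Finset.mem_filter.1 hf).2)
  rw [Finset.sum_congr rfl hsign, Finset.sum_const, nsmul_eq_mul, mul_one]
end

section
/- Let (X, σ, ρ) be any finite cubic combinatorial map (genus 0 is not assumed). Then the number of vertices n⁺(f) + n⁻(f) is even, and for every Tait coloring f and every permutation π of the color set {1,2,3}, the sign s(π ∘ f) equals s(f), where s(g) = 1 if n⁺(g) ≡ n⁻(g) (mod 4) and s(g) = −1 otherwise. In other words, the sign of a Tait coloring is invariant under global permutation of the three colors. -/
/-! A cubic map has `|X| = 3V`, since `rho` has order 3 and no fixed points, and `|X| = 2E`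
likewise for `sigma`; hence `V` is even. Whether a dart is positive depends only on its vertex,
and under a Tait coloring every dart is positive or negative, so `n⁺ + n⁻ = |X| / 3 = V`.
A permutation of `Fin 3` is `c ↦ c + k` or `c ↦ k - c`; the first kind preserves positive and
negative darts, the second swaps them, and `n⁺ ≡ n⁻ [MOD 4]` is symmetric in `n⁺, n⁻`. -/

section FreeAction

open MulAction

variable {p : ℕ} [Fact p.Prime]

theorem stabilizer_zpowers_eq_bot_of_pow_prime {α : Type*} {g : Equiv.Perm α} (hg : g ^ p = 1)
    (hfix : ∀ x, g x ≠ x) (x : α) :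
    stabilizer (Subgroup.zpowers g) x = ⊥ := by
  have hg1 : g ≠ 1 := fun h => hfix x (by simp [h])
  have : Fact (Nat.card (Subgroup.zpowers g)).Prime := by
    rwa [Nat.card_zpowers, orderOf_eq_prime hg hg1]
  refine (Subgroup.eq_bot_or_eq_top_of_prime_card _).resolve_right fun htop => hfix x ?_
  have hmem : (⟨g, Subgroup.mem_zpowers g⟩ : Subgroup.zpowers g) ∈ stabilizer _ x :=
    htop ▸ Subgroup.mem_top _
  exact hmem

theorem card_eq_orbitCount_mul_of_pow_prime {α : Type} [Fintype α] {g : Equiv.Perm α}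
    (hg : g ^ p = 1) (hfix : ∀ x, g x ≠ x) :
    Nat.card α = orbitCount (Subgroup.zpowers g) * p := by
  rcases isEmpty_or_nonempty α with hα | ⟨⟨x⟩⟩
  · simp [orbitCount]
  calc Nat.card α = orbitCount (Subgroup.zpowers g) * Nat.card (Subgroup.zpowers g) :=
        (Nat.card_congr
          (selfEquivOrbitsQuotientProd (stabilizer_zpowers_eq_bot_of_pow_prime hg hfix))).trans
          (Nat.card_prod _ _)
    _ = orbitCount (Subgroup.zpowers g) * p := by
        rw [Nat.card_zpowers, orderOf_eq_prime hg fun h => hfix x (by simp [h])]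

theorem dvd_card_subtype_of_pow_prime {α : Type} [Fintype α] {g : Equiv.Perm α}
    (hg : g ^ p = 1) (hfix : ∀ x, g x ≠ x) (P : α → Prop) (hP : ∀ x, P (g x) ↔ P x) :
    p ∣ Nat.card {x // P x} := by
  classical
  have hg' : g.subtypePerm hP ^ p = 1 := by
    ext x
    simp [hg]
  exact Dvd.intro_left _
    (card_eq_orbitCount_mul_of_pow_prime hg' fun x hx => hfix x (congrArg Subtype.val hx)).symm

end FreeAction

section FinThree

theorem fin_three_cyclic_or_anticyclic_of_ne {a b c : Fin 3} (hab : b ≠ a) (hac : c ≠ a)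
    (hbc : c ≠ b) : (b = a + 1 ∧ c = a + 2) ∨ (b = a + 2 ∧ c = a + 1) := by
  revert a b c; decide

theorem fin_three_cyclic_rotate {a b c : Fin 3} :
    (a = c + 1 ∧ b = c + 2) ↔ (b = a + 1 ∧ c = a + 2) := by
  revert a b c; decide

theorem fin_three_anticyclic_rotate {a b c : Fin 3} :
    (a = c + 2 ∧ b = c + 1) ↔ (b = a + 2 ∧ c = a + 1) := by
  revert a b c; decide

theorem fin_three_add_one_ne_add_two (a : Fin 3) : a + 1 ≠ a + 2 := by
  revert a; decide

theorem fin_three_sub_eq_sub_add_one_iff {k a b : Fin 3} : k - b = k - a + 1 ↔ b = a + 2 := by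
  revert k a b; decide

theorem fin_three_sub_eq_sub_add_two_iff {k a b : Fin 3} : k - b = k - a + 2 ↔ b = a + 1 := by
  revert k a b; decide

theorem Equiv.Perm.fin_three_eq_add_or_eq_sub (π : Equiv.Perm (Fin 3)) :
    (∃ k, ∀ c, π c = c + k) ∨ ∃ k, ∀ c, π c = k - c := by
  revert π; decide

end FinThree

namespace CombMap

variable {X : Type} [Fintype X] {m : CombMap X} (f : X → Fin 3)

section Recoloring

variable {f}

theorem positiveDart_add_const_iff {k : Fin 3} {x : X} :
    m.PositiveDart (fun y => f y + k) x ↔ m.PositiveDart f x := by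
  simp only [PositiveDart, add_right_comm _ k, add_left_inj]

theorem negativeDart_add_const_iff {k : Fin 3} {x : X} :
    m.NegativeDart (fun y => f y + k) x ↔ m.NegativeDart f x := by
  simp only [NegativeDart, add_right_comm _ k, add_left_inj]

theorem positiveDart_const_sub_iff {k : Fin 3} {x : X} :
    m.PositiveDart (fun y => k - f y) x ↔ m.NegativeDart f x := by
  simp only [PositiveDart, NegativeDart, fin_three_sub_eq_sub_add_one_iff,
    fin_three_sub_eq_sub_add_two_iff]

theorem negativeDart_const_sub_iff {k : Fin 3} {x : X} :
    m.NegativeDart (fun y => k - f y) x ↔ m.PositiveDart f x := by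
  simp only [PositiveDart, NegativeDart, fin_three_sub_eq_sub_add_one_iff,
    fin_three_sub_eq_sub_add_two_iff]

variable (f)

theorem sign_add_const (k : Fin 3) : m.sign (fun y => f y + k) = m.sign f := by
  have hplus : m.nplus (fun y => f y + k) = m.nplus f :=
    congrArg (· / 3) (Nat.card_congr (Equiv.subtypeEquivRight fun _ => positiveDart_add_const_iff))
  have hminus : m.nminus (fun y => f y + k) = m.nminus f :=
    congrArg (· / 3) (Nat.card_congr (Equiv.subtypeEquivRight fun _ => negativeDart_add_const_iff))
  simp only [sign, hplus, hminus]

theorem sign_const_sub (k : Fin 3) : m.sign (fun y => k - f y) = m.sign f := by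
  have hplus : m.nplus (fun y => k - f y) = m.nminus f :=
    congrArg (· / 3) (Nat.card_congr (Equiv.subtypeEquivRight fun _ => positiveDart_const_sub_iff))
  have hminus : m.nminus (fun y => k - f y) = m.nplus f :=
    congrArg (· / 3) (Nat.card_congr (Equiv.subtypeEquivRight fun _ => negativeDart_const_sub_iff))
  simp only [sign, hplus, hminus, Nat.ModEq.comm]

theorem sign_perm_comp (π : Equiv.Perm (Fin 3)) : m.sign (fun x => π (f x)) = m.sign f := by
  rcases π.fin_three_eq_add_or_eq_sub with ⟨k, hk⟩ | ⟨k, hk⟩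
  · simpa only [hk] using sign_add_const f k
  · simpa only [hk] using sign_const_sub f k

end Recoloring

theorem not_positiveDart_and_negativeDart (x : X) :
    ¬ (m.PositiveDart f x ∧ m.NegativeDart f x) :=
  fun ⟨hpos, hneg⟩ => fin_three_add_one_ne_add_two _ (hpos.1.symm.trans hneg.1)

section Cubic


theorem rho_inv_apply_of_rho_pow_three (h : m.rho ^ 3 = 1) (x : X) :
    m.rho⁻¹ x = m.rho (m.rho x) := by
  rw [inv_eq_of_mul_eq_one_right (a := m.rho) (b := m.rho ^ 2) (by rw [← pow_succ', h]), sq,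
    Equiv.Perm.mul_apply]

theorem rho_rho_rho_apply_of_rho_pow_three (h : m.rho ^ 3 = 1) (x : X) :
    m.rho (m.rho (m.rho x)) = x := by
  simpa only [pow_succ, pow_zero, one_mul, Equiv.Perm.mul_apply, Equiv.Perm.one_apply] using
    congrArg (· x) h

theorem positiveDart_iff_of_rho_pow_three (h : m.rho ^ 3 = 1) {x : X} :
    m.PositiveDart f x ↔ f (m.rho (m.rho x)) = f x + 1 ∧ f (m.rho x) = f x + 2 := by
  rw [PositiveDart, rho_inv_apply_of_rho_pow_three h, rho_inv_apply_of_rho_pow_three h,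
    rho_rho_rho_apply_of_rho_pow_three h]

theorem negativeDart_iff_of_rho_pow_three (h : m.rho ^ 3 = 1) {x : X} :
    m.NegativeDart f x ↔ f (m.rho (m.rho x)) = f x + 2 ∧ f (m.rho x) = f x + 1 := by
  rw [NegativeDart, rho_inv_apply_of_rho_pow_three h, rho_inv_apply_of_rho_pow_three h,
    rho_rho_rho_apply_of_rho_pow_three h]

theorem positiveDart_rho_iff (h : m.rho ^ 3 = 1) (x : X) :
    m.PositiveDart f (m.rho x) ↔ m.PositiveDart f x := by
  rw [positiveDart_iff_of_rho_pow_three f h, positiveDart_iff_of_rho_pow_three f h,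
    rho_rho_rho_apply_of_rho_pow_three h]
  exact fin_three_cyclic_rotate

theorem negativeDart_rho_iff (h : m.rho ^ 3 = 1) (x : X) :
    m.NegativeDart f (m.rho x) ↔ m.NegativeDart f x := by
  rw [negativeDart_iff_of_rho_pow_three f h, negativeDart_iff_of_rho_pow_three f h,
    rho_rho_rho_apply_of_rho_pow_three h]
  exact fin_three_anticyclic_rotate

theorem positiveDart_or_negativeDart (h : m.rho ^ 3 = 1) (hf : m.IsTaitColoring f) (x : X) :
    m.PositiveDart f x ∨ m.NegativeDart f x := by
  rw [positiveDart_iff_of_rho_pow_three f h, negativeDart_iff_of_rho_pow_three f h]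
  obtain ⟨h₁, h₂, h₁₂⟩ := hf.2 x
  exact fin_three_cyclic_or_anticyclic_of_ne h₂ h₁ h₁₂.symm

theorem card_positiveDart_add_card_negativeDart (h : m.rho ^ 3 = 1) (hf : m.IsTaitColoring f) :
    Nat.card {x // m.PositiveDart f x} + Nat.card {x // m.NegativeDart f x} = Nat.card X := by
  classical
  have hcompl (x : X) : m.NegativeDart f x ↔ ¬ m.PositiveDart f x :=
    ⟨fun hneg hpos => not_positiveDart_and_negativeDart f x ⟨hpos, hneg⟩,
      (positiveDart_or_negativeDart f h hf x).resolve_left⟩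
  rw [Nat.card_congr (Equiv.subtypeEquivRight hcompl), ← Nat.card_sum]
  exact Nat.card_congr (Equiv.sumCompl _)

theorem IsCubic.card_eq_numVertices_mul_three (hm : m.IsCubic) :
    Nat.card X = m.numVertices * 3 :=
  card_eq_orbitCount_mul_of_pow_prime hm.1 hm.2

theorem IsCubic.nplus_add_nminus (hm : m.IsCubic) (hf : m.IsTaitColoring f) :
    m.nplus f + m.nminus f = m.numVertices := by
  have hplus := dvd_card_subtype_of_pow_prime hm.1 hm.2 _ (positiveDart_rho_iff f hm.1)
  have hcard := card_positiveDart_add_card_negativeDart f hm.1 hf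
  rw [nplus, nminus, ← Nat.add_div_of_dvd_right hplus, hcard, hm.card_eq_numVertices_mul_three,
    Nat.mul_div_cancel _ three_pos]

end Cubic

theorem card_eq_numEdges_mul_two : Nat.card X = m.numEdges * 2 :=
  card_eq_orbitCount_mul_of_pow_prime (sq m.sigma ▸ m.sigma_invol) m.sigma_fixfree

theorem IsCubic.even_numVertices (hm : m.IsCubic) : Even m.numVertices := by
  have h₂ := card_eq_numEdges_mul_two (m := m)
  have h₃ := hm.card_eq_numVertices_mul_three
  rw [Nat.even_iff]
  omega

end CombMap

/-- For any finite cubic combinatorial map (genus 0 not assumed) and any Tait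
coloring `f`: the number of vertices, which equals `n⁺(f) + n⁻(f)`, is even, and
for every permutation `π` of the three colors the sign of the recoloring `π ∘ f`
equals the sign of `f`. -/
theorem sign_comp_perm_eq_sign {X : Type} [Fintype X] (m : CombMap X)
    (hcubic : m.IsCubic) (f : X → Fin 3) (hf : m.IsTaitColoring f) :
    (m.nplus f + m.nminus f = m.numVertices ∧ Even (m.nplus f + m.nminus f)) ∧
      ∀ π : Equiv.Perm (Fin 3), m.sign (fun x => π (f x)) = m.sign f := by
  have hV := hcubic.nplus_add_nminus f hf
  exact ⟨⟨hV, hV ▸ hcubic.even_numVertices⟩, CombMap.sign_perm_comp f⟩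
end

section
/- Let G be a finite 3-regular simple graph that contains a bridge, i.e., an edge e such that the graph obtained from G by deleting e has more connected components than G. Then G admits no Tait coloring: there is no function f from the edge set of G to Fin 3 such that any two distinct edges sharing a vertex receive distinct colors. -/
/-!
In a `k`-regular graph properly edge-coloured with `k ≥ 2` colours, every colour class is a
perfect matching. The symmetric difference of the classes of two colours is then 2-regular, i.e.
a disjoint union of cycles, so every edge lies on a cycle and is not a bridge.
-/

namespace SimpleGraph

variable {V : Type*} {G : SimpleGraph V}

theorem reachable_deleteEdges_of_not_isBridge {e : Sym2 V} (he : ¬ G.IsBridge e) {a b : V}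
    (hab : G.Reachable a b) : (G.deleteEdges {e}).Reachable a b := by
  induction e with | h u v =>
  rw [isBridge_iff, not_not] at he
  rw [reachable_iff_reflTransGen] at hab ⊢
  refine Relation.ReflTransGen.lift' id (fun x y hxy ↦ ?_) a b hab
  rw [Function.onFun, id, id, ← reachable_iff_reflTransGen]
  by_cases hxy' : s(x, y) = s(u, v)
  · rcases Sym2.eq_iff.mp hxy' with ⟨rfl, rfl⟩ | ⟨rfl, rfl⟩
    exacts [he, he.symm]
  · exact (deleteEdges_adj.mpr ⟨hxy, hxy'⟩).reachable

theorem isBridge_of_card_connectedComponent_lt {e : Sym2 V}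
    (h : Nat.card G.ConnectedComponent < Nat.card (G.deleteEdges {e}).ConnectedComponent) :
    G.IsBridge e := by
  by_contra he
  have hinj : (ConnectedComponent.map (Hom.ofLE (G.deleteEdges_le {e}))).Injective := by
    rintro ⟨a⟩ ⟨b⟩ hab
    exact ConnectedComponent.sound <| reachable_deleteEdges_of_not_isBridge he <|
      ConnectedComponent.exact hab
  exact h.ne <|
    (Nat.card_eq_of_bijective _ ⟨hinj, ConnectedComponent.surjective_map_ofLE _⟩).symm

namespace Coloring

variable {α : Type*}

section

variable (C : G.lineGraph.Coloring α)

def edgeColorClass (a : α) : G.Subgraph where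
  verts := Set.univ
  Adj x y := ∃ h : G.Adj x y, C ⟨s(x, y), h⟩ = a
  adj_sub := fun ⟨h, _⟩ ↦ h
  edge_vert _ := Set.mem_univ _
  symm.symm _ _ := fun ⟨h, hc⟩ ↦
    ⟨h.symm, (congrArg C (Subtype.ext Sym2.eq_swap)).trans hc⟩

theorem eq_of_color_eq {v w w' : V} (h : G.Adj v w) (h' : G.Adj v w')
    (hc : C ⟨s(v, w), h⟩ = C ⟨s(v, w'), h'⟩) : w = w' := by
  by_contra hne
  refine C.valid (lineGraph_adj_iff_exists.mpr ⟨?_, v, by simp, by simp⟩) hc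
  exact fun heq ↦ hne (Sym2.congr_right.mp (congrArg Subtype.val heq))

theorem exists_adj_color_eq [Fintype α] [G.LocallyFinite]
    (hreg : G.IsRegularOfDegree (Fintype.card α)) (v : V) (a : α) :
    ∃ w, ∃ h : G.Adj v w, C ⟨s(v, w), h⟩ = a := by
  let φ : G.neighborSet v → α := fun w ↦ C ⟨s(v, w), w.2⟩
  have hφ : φ.Bijective := (Fintype.bijective_iff_injective_and_card φ).mpr
    ⟨fun w w' hc ↦ Subtype.ext (C.eq_of_color_eq w.2 w'.2 hc),
      by rw [card_neighborSet_eq_degree, hreg v]⟩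
  obtain ⟨w, hw⟩ := hφ.2 a
  exact ⟨w, w.2, hw⟩

theorem isPerfectMatching_edgeColorClass [Fintype α] [G.LocallyFinite]
    (hreg : G.IsRegularOfDegree (Fintype.card α)) (a : α) :
    (C.edgeColorClass a).IsPerfectMatching := by
  refine Subgraph.isPerfectMatching_iff.mpr fun v ↦ ?_
  obtain ⟨w, h, hc⟩ := C.exists_adj_color_eq hreg v a
  exact ⟨w, ⟨h, hc⟩, fun w' ⟨h', hc'⟩ ↦ C.eq_of_color_eq h' h (hc'.trans hc.symm)⟩

end

open scoped symmDiff in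
theorem not_isBridge [Finite V] [Fintype α] [Nontrivial α] [G.LocallyFinite]
    (C : G.lineGraph.Coloring α) (hreg : G.IsRegularOfDegree (Fintype.card α)) {e : Sym2 V}
    (he : e ∈ G.edgeSet) :
    ¬ G.IsBridge e := by
  induction e with | h u v =>
  obtain ⟨b, hb⟩ := exists_ne (C ⟨s(u, v), he⟩)
  set M := C.edgeColorClass (C ⟨s(u, v), he⟩)
  set M' := C.edgeColorClass b
  have hcyc := (C.isPerfectMatching_edgeColorClass hreg (C ⟨s(u, v), he⟩)).symmDiff_isCycles
    (C.isPerfectMatching_edgeColorClass hreg b)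
  have hadj : (M.spanningCoe ∆ M'.spanningCoe).Adj u v :=
    Or.inl ⟨⟨he, rfl⟩, fun ⟨_, hc⟩ ↦ hb hc.symm⟩
  have hle : M.spanningCoe ∆ M'.spanningCoe ≤ G :=
    symmDiff_le_sup.trans (sup_le M.spanningCoe_le M'.spanningCoe_le)
  exact fun hbr ↦ isBridge_iff.mp hbr <|
    (hcyc.reachable_deleteEdges hadj).mono (deleteEdges_mono hle)

end Coloring

end SimpleGraph

theorem no_taitColoring_of_isBridge_general {V : Type} [Fintype V]
    (G : SimpleGraph V) [DecidableRel G.Adj]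
    (hreg : G.IsRegularOfDegree 3)
    (hbridge : ∃ e ∈ G.edgeSet,
      Nat.card G.ConnectedComponent <
        Nat.card (G.deleteEdges {e}).ConnectedComponent) :
    ¬ ∃ f : G.edgeSet → Fin 3,
        ∀ e₁ e₂ : G.edgeSet, e₁ ≠ e₂ →
          (∃ v : V, v ∈ (e₁ : Sym2 V) ∧ v ∈ (e₂ : Sym2 V)) → f e₁ ≠ f e₂ := by
  rintro ⟨f, hf⟩
  obtain ⟨e, he, hcard⟩ := hbridge
  let C : G.lineGraph.Coloring (Fin 3) :=
    .mk f fun hadj ↦ (SimpleGraph.lineGraph_adj_iff_exists.mp hadj).elim (hf _ _)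
  exact C.not_isBridge (by rwa [Fintype.card_fin]) he
    (SimpleGraph.isBridge_of_card_connectedComponent_lt hcard)

/-- A finite 3-regular simple graph containing a bridge — an edge whose deletion
increases the number of connected components — admits no Tait coloring, i.e. no
function from its edge set to `Fin 3` giving distinct colors to any two distinct
edges sharing a vertex. -/
theorem no_taitColoring_of_isBridge {V : Type} [Fintype V] [DecidableEq V]
    (G : SimpleGraph V) [DecidableRel G.Adj]
    (hreg : G.IsRegularOfDegree 3)
    (hbridge : ∃ e ∈ G.edgeSet,
      Nat.card G.ConnectedComponent <
        Nat.card (G.deleteEdges {e}).ConnectedComponent) :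
    ¬ ∃ f : G.edgeSet → Fin 3,
        ∀ e₁ e₂ : G.edgeSet, e₁ ≠ e₂ →
          (∃ v : V, v ∈ (e₁ : Sym2 V) ∧ v ∈ (e₂ : Sym2 V)) → f e₁ ≠ f e₂ :=
  no_taitColoring_of_isBridge_general G hreg hbridge
end
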